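/- Gradient bound for the trilinear form in two dimensions: Let D be a bounded measurable subset of ℝ². There exists a constant C > 0, depending only on D, such that for all continuously differentiable compactly supported vector fields u, v, w : ℝ² → ℝ² whose supports are contained in D, one has |b*(u,v,w)| ≤ C · ‖Du‖_{L²} · ‖Dv‖_{L²} · ‖Dw‖_{L²}. -/

import Mathlib

open MeasureTheory
open scoped RealInnerProductSpace

/-- The convective term `u·∇v`, i.e. `x ↦ Dv(x)(u(x))`. -/
noncomputable def convTerm {d : ℕ}
    (u v : EuclideanSpace ℝ (Fin d) → EuclideanSpace ℝ (Fin d)) :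
    EuclideanSpace ℝ (Fin d) → EuclideanSpace ℝ (Fin d) :=
  fun x => fderiv ℝ v x (u x)

/-- The L² inner product `(f, g) = ∫ f(x)·g(x) dx` of two vector fields. -/
noncomputable def l2inner {d : ℕ}
    (f g : EuclideanSpace ℝ (Fin d) → EuclideanSpace ℝ (Fin d)) : ℝ :=
  ∫ x, ⟪f x, g x⟫

/-- The skew-symmetric trilinear form `b*(u,v,w) = ½(u·∇v, w) − ½(u·∇w, v)`. -/
noncomputable def bstar {d : ℕ}
    (u v w : EuclideanSpace ℝ (Fin d) → EuclideanSpace ℝ (Fin d)) : ℝ :=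
  (1 / 2) * l2inner (convTerm u v) w - (1 / 2) * l2inner (convTerm u w) v

/-- The Frobenius norm of the Jacobian matrix of `v` at `x`:
`(∑ i ‖Dv(x) eᵢ‖²)^{1/2} = (∑ i ∑ j (∂vⱼ/∂xᵢ)²)^{1/2}`. -/
noncomputable def frobNorm {d : ℕ}
    (v : EuclideanSpace ℝ (Fin d) → EuclideanSpace ℝ (Fin d))
    (x : EuclideanSpace ℝ (Fin d)) : ℝ :=
  Real.sqrt (∑ i : Fin d, ‖fderiv ℝ v x (EuclideanSpace.single i 1)‖ ^ 2)

/-- `‖Dv‖_{L²}`: the L² norm over `ℝ^d` of `x ↦ ‖Dv(x)‖_F`. -/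
noncomputable def gradL2 {d : ℕ}
    (v : EuclideanSpace ℝ (Fin d) → EuclideanSpace ℝ (Fin d)) : ℝ :=
  (eLpNorm (fun x => frobNorm v x) 2 volume).toReal

/-! Each half of `b*` is an integral `∫ ⟪Dv(x) u(x), w(x)⟫`, which Hölder's inequality with
exponents `(2, 4, 4)` bounds by `‖Dv‖_{L²} ‖u‖_{L⁴} ‖w‖_{L⁴}`. In dimension two the
Gagliardo–Nirenberg–Sobolev inequality gives `‖u‖_{L⁴} ≲ ‖Du‖_{L^{4/3}}`, and since `Du` vanishes
off the closure of the bounded set `D`, Hölder again gives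
`‖Du‖_{L^{4/3}} ≤ |closure D|^{1/4} ‖Du‖_{L²}`. The operator norm of the Jacobian is dominated
by its Frobenius norm. -/

open scoped ENNReal NNReal
open Module

section Holder

variable {α E F : Type*} [MeasurableSpace α] {μ : Measure α}
  [NormedAddCommGroup E] [NormedSpace ℝ E] [NormedAddCommGroup F] [InnerProductSpace ℝ F]

theorem enorm_integral_inner_apply_le {p q r s : ℝ≥0∞} [ENNReal.HolderTriple p q r]
    [ENNReal.HolderConjugate r s] {T : α → E →L[ℝ] F} {u : α → E} {w : α → F}
    (hT : AEStronglyMeasurable T μ) (hu : AEStronglyMeasurable u μ)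
    (hw : AEStronglyMeasurable w μ) :
    ‖∫ x, ⟪T x (u x), w x⟫ ∂μ‖ₑ ≤ eLpNorm T p μ * eLpNorm u q μ * eLpNorm w s μ := by
  have hTu : eLpNorm (fun x ↦ T x (u x)) r μ ≤ eLpNorm T p μ * eLpNorm u q μ := by
    simpa using eLpNorm_le_eLpNorm_mul_eLpNorm'_of_norm hT hu (fun S y ↦ S y) 1
      (.of_forall fun x ↦ by simpa using (T x).le_opNorm (u x))
  calc ‖∫ x, ⟪T x (u x), w x⟫ ∂μ‖ₑ ≤ eLpNorm (fun x ↦ ⟪T x (u x), w x⟫) 1 μ := by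
        rw [eLpNorm_one_eq_lintegral_enorm]; exact enorm_integral_le_lintegral_enorm _
    _ ≤ eLpNorm (fun x ↦ T x (u x)) r μ * eLpNorm w s μ := by
        simpa using eLpNorm_le_eLpNorm_mul_eLpNorm'_of_norm
          (isBoundedBilinearMap_apply.continuous.comp_aestronglyMeasurable₂ hT hu) hw
          (fun y z ↦ ⟪y, z⟫) 1 (.of_forall fun x ↦ by simpa using abs_real_inner_le_norm _ _)
    _ ≤ _ := by gcongr

end Holder

section Sobolev

variable {E F : Type*} [NormedAddCommGroup E] [NormedSpace ℝ E] [MeasurableSpace E]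
  [BorelSpace E] [FiniteDimensional ℝ E] (μ : Measure E) [μ.IsAddHaarMeasure]
  [NormedAddCommGroup F] [NormedSpace ℝ F] [FiniteDimensional ℝ F]

theorem eLpNorm_le_mul_eLpNorm_fderiv_of_le {u : E → F} {s : Set E} (hu : ContDiff ℝ 1 u)
    (hsu : u.support ⊆ s) (hs : Bornology.IsBounded s) {p q : ℝ≥0} {r : ℝ≥0∞} (hp : 1 ≤ p)
    (h2p : p < finrank ℝ E) (hpq : p⁻¹ - (finrank ℝ E : ℝ)⁻¹ ≤ (q : ℝ)⁻¹) (hpr : p ≤ r) :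
    eLpNorm u q μ ≤ eLpNormLESNormFDerivOfLeConst F μ s p q *
      μ (closure s) ^ (1 / (p : ℝ≥0∞).toReal - 1 / r.toReal) * eLpNorm (fderiv ℝ u) r μ := by
  have hsupp : (fderiv ℝ u).support ⊆ closure s :=
    (support_fderiv_subset ℝ).trans (closure_mono hsu)
  have hHolder : eLpNorm (fderiv ℝ u) p μ ≤
      eLpNorm (fderiv ℝ u) r μ * μ (closure s) ^ (1 / (p : ℝ≥0∞).toReal - 1 / r.toReal) := by
    rw [← eLpNorm_restrict_eq_of_support_subset (ε := E →L[ℝ] F) hsupp,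
      ← eLpNorm_restrict_eq_of_support_subset (ε := E →L[ℝ] F) (p := r) hsupp,
      ← Measure.restrict_apply_univ]
    exact eLpNorm_le_eLpNorm_mul_rpow_measure_univ hpr
      (hu.continuous_fderiv one_ne_zero).aestronglyMeasurable
  calc eLpNorm u q μ ≤ eLpNormLESNormFDerivOfLeConst F μ s p q * eLpNorm (fderiv ℝ u) p μ :=
        eLpNorm_le_eLpNorm_fderiv_of_le μ hu hsu hp h2p hpq hs
    _ ≤ _ := by rw [mul_assoc]; gcongr; rwa [mul_comm]

theorem exists_eLpNorm_four_le_mul_eLpNorm_fderiv_two (hE : finrank ℝ E = 2) {s : Set E}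
    (hs : Bornology.IsBounded s) :
    ∃ K : ℝ≥0, ∀ u : E → F, ContDiff ℝ 1 u → u.support ⊆ s →
      eLpNorm u 4 μ ≤ K * eLpNorm (fderiv ℝ u) 2 μ := by
  have hfin : μ (closure s) ^ (1 / 4 : ℝ) ≠ ∞ :=
    ENNReal.rpow_ne_top_of_nonneg (by norm_num) hs.closure.measure_lt_top.ne
  refine ⟨eLpNormLESNormFDerivOfLeConst F μ s (4 / 3) 4 * (μ (closure s) ^ (1 / 4 : ℝ)).toNNReal,
    fun u hu hsu => ?_⟩
  have hSobolev := eLpNorm_le_mul_eLpNorm_fderiv_of_le μ hu hsu hs (p := 4 / 3) (q := 4) (r := 2)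
    (by exact_mod_cast (by norm_num : (1 : ℝ) ≤ 4 / 3)) (by rw [hE]; norm_num)
    (by rw [hE]; norm_num) (by exact_mod_cast (by norm_num : (4 / 3 : ℝ) ≤ 2))
  have hexp : 1 / ((4 / 3 : ℝ≥0) : ℝ≥0∞).toReal - 1 / (2 : ℝ≥0∞).toReal = 1 / 4 := by norm_num
  rw [hexp] at hSobolev
  calc eLpNorm u 4 μ = eLpNorm u ((4 : ℝ≥0) : ℝ≥0∞) μ := by norm_num
    _ ≤ _ := hSobolev
    _ = _ := by rw [ENNReal.coe_mul, ENNReal.coe_toNNReal hfin]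

end Sobolev

section VectorField

variable {d : ℕ} {u v w : EuclideanSpace ℝ (Fin d) → EuclideanSpace ℝ (Fin d)}

theorem norm_fderiv_le_frobNorm (v : EuclideanSpace ℝ (Fin d) → EuclideanSpace ℝ (Fin d))
    (x : EuclideanSpace ℝ (Fin d)) : ‖fderiv ℝ v x‖ ≤ frobNorm v x := by
  set T := fderiv ℝ v x
  refine T.opNorm_le_bound (Real.sqrt_nonneg _) fun y => ?_
  have hy : T y = ∑ i, y i • T (EuclideanSpace.single i 1) := by
    conv_lhs => rw [← (EuclideanSpace.basisFun (Fin d) ℝ).sum_repr y]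
    simp
  calc ‖T y‖ ≤ ∑ i, |y i| * ‖T (EuclideanSpace.single i 1)‖ := by
        rw [hy]; exact (norm_sum_le _ _).trans_eq (by simp [norm_smul])
    _ ≤ √(∑ i, |y i| ^ 2) * √(∑ i, ‖T (EuclideanSpace.single i 1)‖ ^ 2) :=
        Real.sum_mul_le_sqrt_mul_sqrt _ _ _
    _ = frobNorm v x * ‖y‖ := by
        rw [frobNorm, mul_comm, EuclideanSpace.norm_eq]
        simp [T, Real.norm_eq_abs]

theorem gradL2_nonneg (v : EuclideanSpace ℝ (Fin d) → EuclideanSpace ℝ (Fin d)) :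
    0 ≤ gradL2 v :=
  ENNReal.toReal_nonneg

theorem memLp_frobNorm (hv : ContDiff ℝ 1 v) (hcv : HasCompactSupport v) (p : ℝ≥0∞)
    (μ : Measure (EuclideanSpace ℝ (Fin d))) [IsFiniteMeasureOnCompacts μ] :
    MemLp (frobNorm v) p μ := by
  have hcont : Continuous (frobNorm v) :=
    Real.continuous_sqrt.comp <| continuous_finsetSum _ fun i _ =>
      ((hv.continuous_fderiv one_ne_zero).clm_apply continuous_const).norm.pow 2
  exact hcont.memLp_of_hasCompactSupport <| (hcv.fderiv (𝕜 := ℝ)).comp_left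
    (g := fun T : _ →L[ℝ] _ => √(∑ i, ‖T (EuclideanSpace.single i 1)‖ ^ 2)) (by simp)

theorem eLpNorm_fderiv_lt_top_and_toReal_le_gradL2 (hv : ContDiff ℝ 1 v)
    (hcv : HasCompactSupport v) :
    eLpNorm (fderiv ℝ v) 2 volume < ∞ ∧ (eLpNorm (fderiv ℝ v) 2 volume).toReal ≤ gradL2 v := by
  have hle : eLpNorm (fderiv ℝ v) 2 volume ≤ eLpNorm (frobNorm v) 2 volume :=
    eLpNorm_mono_real (norm_fderiv_le_frobNorm v)
  have hfin := (memLp_frobNorm hv hcv 2 volume).eLpNorm_lt_top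
  exact ⟨hle.trans_lt hfin, ENNReal.toReal_mono hfin.ne hle⟩

theorem enorm_l2inner_convTerm_le (v : EuclideanSpace ℝ (Fin d) → EuclideanSpace ℝ (Fin d))
    (hu : AEStronglyMeasurable u volume) (hw : AEStronglyMeasurable w volume) :
    ‖l2inner (convTerm u v) w‖ₑ ≤
      eLpNorm (fderiv ℝ v) 2 volume * eLpNorm u 4 volume * eLpNorm w 4 volume := by
  -- `Dv · u` lies in `L^r` with `r = (2⁻¹ + 4⁻¹)⁻¹ = 4/3`, the exponent dual to `4`.
  have := ENNReal.HolderTriple.of 2 4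
  have : ENNReal.HolderConjugate (2⁻¹ + 4⁻¹)⁻¹ 4 := by
    rw [ENNReal.holderConjugate_iff, inv_inv, add_assoc, show (4 : ℝ≥0∞) = 2 * 2 by norm_num,
      ENNReal.mul_inv (by simp) (by simp), ← two_mul, ← mul_assoc,
      ENNReal.mul_inv_cancel (by simp) (by simp), one_mul, ENNReal.inv_two_add_inv_two]
  exact enorm_integral_inner_apply_le (p := 2) (r := (2⁻¹ + 4⁻¹)⁻¹)
    (measurable_fderiv ℝ v).aestronglyMeasurable hu hw

theorem abs_l2inner_convTerm_le (hu : ContDiff ℝ 1 u) (hv : ContDiff ℝ 1 v)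
    (hw : ContDiff ℝ 1 w) (hcu : HasCompactSupport u) (hcv : HasCompactSupport v)
    (hcw : HasCompactSupport w) {K : ℝ≥0}
    (hKu : eLpNorm u 4 volume ≤ K * eLpNorm (fderiv ℝ u) 2 volume)
    (hKw : eLpNorm w 4 volume ≤ K * eLpNorm (fderiv ℝ w) 2 volume) :
    |l2inner (convTerm u v) w| ≤ K ^ 2 * (gradL2 u * gradL2 v * gradL2 w) := by
  obtain ⟨hu_fin, hu_le⟩ := eLpNorm_fderiv_lt_top_and_toReal_le_gradL2 hu hcu
  obtain ⟨hv_fin, hv_le⟩ := eLpNorm_fderiv_lt_top_and_toReal_le_gradL2 hv hcv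
  obtain ⟨hw_fin, hw_le⟩ := eLpNorm_fderiv_lt_top_and_toReal_le_gradL2 hw hcw
  have hbound : ‖l2inner (convTerm u v) w‖ₑ ≤ eLpNorm (fderiv ℝ v) 2 volume *
      (K * eLpNorm (fderiv ℝ u) 2 volume) * (K * eLpNorm (fderiv ℝ w) 2 volume) :=
    (enorm_l2inner_convTerm_le v hu.continuous.aestronglyMeasurable
      hw.continuous.aestronglyMeasurable).trans (by gcongr)
  calc |l2inner (convTerm u v) w| = ‖l2inner (convTerm u v) w‖ₑ.toReal := by simp
    _ ≤ (eLpNorm (fderiv ℝ v) 2 volume * (K * eLpNorm (fderiv ℝ u) 2 volume) *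
        (K * eLpNorm (fderiv ℝ w) 2 volume)).toReal :=
      ENNReal.toReal_mono (by finiteness) hbound
    _ = K ^ 2 * ((eLpNorm (fderiv ℝ u) 2 volume).toReal *
        (eLpNorm (fderiv ℝ v) 2 volume).toReal * (eLpNorm (fderiv ℝ w) 2 volume).toReal) := by
      simp only [ENNReal.toReal_mul, ENNReal.coe_toReal]; ring
    _ ≤ K ^ 2 * (gradL2 u * gradL2 v * gradL2 w) := by
      gcongr
      exacts [mul_nonneg (gradL2_nonneg u) (gradL2_nonneg v), gradL2_nonneg u]

end VectorField

theorem bstar_gradient_bound_2d_general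
    (D : Set (EuclideanSpace ℝ (Fin 2)))
    (hD : Bornology.IsBounded D) :
    ∃ C > 0, ∀ u v w : EuclideanSpace ℝ (Fin 2) → EuclideanSpace ℝ (Fin 2),
      ContDiff ℝ 1 u → ContDiff ℝ 1 v → ContDiff ℝ 1 w →
      HasCompactSupport u → HasCompactSupport v → HasCompactSupport w →
      Function.support u ⊆ D → Function.support v ⊆ D → Function.support w ⊆ D →
      |bstar u v w| ≤ C * gradL2 u * gradL2 v * gradL2 w := by
  obtain ⟨K, hK⟩ := exists_eLpNorm_four_le_mul_eLpNorm_fderiv_two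
    (F := EuclideanSpace ℝ (Fin 2)) volume finrank_euclideanSpace_fin hD
  refine ⟨K ^ 2 + 1, by positivity, fun u v w hu hv hw hcu hcv hcw hsu hsv hsw => ?_⟩
  have hvw := abs_l2inner_convTerm_le hu hv hw hcu hcv hcw (hK u hu hsu) (hK w hw hsw)
  have hwv := abs_l2inner_convTerm_le hu hw hv hcu hcw hcv (hK u hu hsu) (hK v hv hsv)
  have hprod := mul_nonneg (mul_nonneg (gradL2_nonneg u) (gradL2_nonneg v)) (gradL2_nonneg w)
  calc |bstar u v w|
      ≤ 1 / 2 * |l2inner (convTerm u v) w| + 1 / 2 * |l2inner (convTerm u w) v| := by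
        rw [bstar]; refine (abs_sub _ _).trans_eq ?_; simp [abs_mul]
    _ ≤ K ^ 2 * (gradL2 u * gradL2 v * gradL2 w) := by rw [mul_right_comm] at hwv; linarith
    _ ≤ (K ^ 2 + 1) * gradL2 u * gradL2 v * gradL2 w := by nlinarith

/-- Gradient bound for the trilinear form in two dimensions: for a bounded
measurable `D ⊆ ℝ²` there is `C > 0`, depending only on `D`, with
`|b*(u,v,w)| ≤ C ‖Du‖_{L²} ‖Dv‖_{L²} ‖Dw‖_{L²}` for all C¹ compactly supported
vector fields supported in `D`. -/
theorem bstar_gradient_bound_2d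
    (D : Set (EuclideanSpace ℝ (Fin 2)))
    (hD : Bornology.IsBounded D) (hDm : MeasurableSet D) :
    ∃ C > 0, ∀ u v w : EuclideanSpace ℝ (Fin 2) → EuclideanSpace ℝ (Fin 2),
      ContDiff ℝ 1 u → ContDiff ℝ 1 v → ContDiff ℝ 1 w →
      HasCompactSupport u → HasCompactSupport v → HasCompactSupport w →
      Function.support u ⊆ D → Function.support v ⊆ D → Function.support w ⊆ D →
      |bstar u v w| ≤ C * gradL2 u * gradL2 v * gradL2 w :=
  bstar_gradient_bound_2d_general D hD
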